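/- arXiv:1305.5621 — 4 statements merged into one kernel-verified Lean document; each statement's English description precedes it below -/
import Mathlib

section
/- Let X and Y be independent real-valued random variables. Then the essential infimum of X+Y equals the sum of the essential infima of X and Y, i.e. ess inf(X+Y) = ess inf X + ess inf Y (where essential infimum is with respect to the underlying probability measure, possibly equal to -infinity). -/
/-!
The lower bound `essInf X + essInf Y ≤ essInf (X + Y)` holds for any pair of functions, since
the sum of two almost-everywhere lower bounds is an almost-everywhere lower bound. For the upper
bound, take `a > essInf X` and `b > essInf Y`: the events `{X < a}` and `{Y < b}` have positive
probability, so by independence so does their intersection, on which `X + Y < a + b`; hence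
`essInf (X + Y) ≤ a + b`. Working in `EReal` covers the case of an infinite essential infimum;
the convention `⊥ + ⊤ = ⊥` is harmless because a real-valued function has essential
infimum `< ⊤` under a nonzero measure.
-/

open MeasureTheory ProbabilityTheory

namespace MeasureTheory

variable {Ω β : Type*} [MeasurableSpace Ω] {μ : Measure Ω}

section CompleteLinearOrder

variable [CompleteLinearOrder β] {f : Ω → β} {c : β}

theorem le_essInf_of_measure_lt_eq_zero (h : μ {ω | f ω < c} = 0) : c ≤ essInf f μ :=
  essInf_eq_sSup μ f ▸ le_sSup h

theorem essInf_le_of_measure_lt_ne_zero (h : μ {ω | f ω < c} ≠ 0) : essInf f μ ≤ c := by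
  rw [essInf_eq_sSup]
  refine sSup_le fun a ha => le_of_not_gt fun hca => h ?_
  exact measure_mono_null (fun ω (hω : f ω < c) => hω.trans hca) ha

theorem measure_lt_ne_zero_of_essInf_lt (h : essInf f μ < c) : μ {ω | f ω < c} ≠ 0 :=
  fun h0 => (le_essInf_of_measure_lt_eq_zero h0).not_gt h

end CompleteLinearOrder

theorem essInf_coe_ereal_ne_top [NeZero μ] (X : Ω → ℝ) :
    essInf (fun ω => (X ω : EReal)) μ ≠ ⊤ := by
  obtain ⟨ω, hω⟩ := (ae_essInf_le (μ := μ) (f := fun ω => (X ω : EReal))).exists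
  exact ne_top_of_le_ne_top (EReal.coe_ne_top _) hω

variable {f g : Ω → EReal}

theorem essInf_add_essInf_le_essInf_add :
    essInf f μ + essInf g μ ≤ essInf (fun ω => f ω + g ω) μ := by
  refine le_essInf_of_ae_le _ ?_
  filter_upwards [ae_essInf_le (μ := μ) (f := f), ae_essInf_le (μ := μ) (f := g)] with ω hf hg
  exact add_le_add hf hg

theorem essInf_add_le_add_of_indepFun (hfg : IndepFun f g μ) {a b : EReal}
    (ha : essInf f μ < a) (hb : essInf g μ < b) : essInf (fun ω => f ω + g ω) μ ≤ a + b := by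
  refine essInf_le_of_measure_lt_ne_zero fun h => ?_
  have hinter : μ (f ⁻¹' Set.Iio a ∩ g ⁻¹' Set.Iio b) ≠ 0 := by
    rw [hfg.measure_inter_preimage_eq_mul _ _ measurableSet_Iio measurableSet_Iio]
    exact mul_ne_zero (measure_lt_ne_zero_of_essInf_lt ha) (measure_lt_ne_zero_of_essInf_lt hb)
  exact hinter (measure_mono_null (fun ω ⟨hfa, hgb⟩ => EReal.add_lt_add hfa hgb) h)

theorem essInf_add_of_indepFun (hfg : IndepFun f g μ)
    (h₁ : essInf f μ ≠ ⊥ ∨ essInf g μ ≠ ⊤) (h₂ : essInf f μ ≠ ⊤ ∨ essInf g μ ≠ ⊥) :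
    essInf (fun ω => f ω + g ω) μ = essInf f μ + essInf g μ :=
  le_antisymm
    (EReal.le_add_of_forall_gt h₁ h₂ fun _ ha _ hb => essInf_add_le_add_of_indepFun hfg ha hb)
    essInf_add_essInf_le_essInf_add

end MeasureTheory

theorem stmt0_general {Ω : Type*} [MeasurableSpace Ω] (μ : Measure Ω) [IsProbabilityMeasure μ]
    (X Y : Ω → ℝ)
    (hindep : IndepFun X Y μ) :
    essInf (fun ω => ((X ω + Y ω : ℝ) : EReal)) μ
      = essInf (fun ω => ((X ω : ℝ) : EReal)) μ
        + essInf (fun ω => ((Y ω : ℝ) : EReal)) μ := by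
  simp only [EReal.coe_add]
  exact essInf_add_of_indepFun (hindep.comp measurable_coe_real_ereal measurable_coe_real_ereal)
    (.inr (essInf_coe_ereal_ne_top Y)) (.inl (essInf_coe_ereal_ne_top X))

/-- For independent real-valued random variables `X` and `Y` on a
probability space, the essential infimum of `X + Y` (taken in `EReal`, so that the
value `-∞` is allowed) equals the sum of the essential infima of `X` and `Y`. -/
theorem stmt0 {Ω : Type*} [MeasurableSpace Ω] (μ : Measure Ω) [IsProbabilityMeasure μ]
    (X Y : Ω → ℝ) (hX : Measurable X) (hY : Measurable Y)
    (hindep : IndepFun X Y μ) :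
    essInf (fun ω => ((X ω + Y ω : ℝ) : EReal)) μ
      = essInf (fun ω => ((X ω : ℝ) : EReal)) μ
        + essInf (fun ω => ((Y ω : ℝ) : EReal)) μ :=
  stmt0_general μ X Y hindep
end

section
/- Let Y be a random variable with E(e^Y) < ∞ and define O(x) := E((e^{Y−x} − 1)^+) for x ≥ 0 and O(x) := E((1 − e^{Y−x})^+) for x < 0. Then for any C ≥ 0 and any u ∈ ℝ \ {0}, |∫_{−C}^{∞} O(x) e^{iux} dx| ≤ E(e^Y) + (1 + 2|u|)/u². -/
/-!
Write `O(x) = E[otmPayoff Y x]`. Since `0 ≤ otmPayoff y x ≤ e^{-x} (1 + e^y)`, Fubini reduces the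
claim to the bound `|∫_{-C}^∞ otmPayoff y x e^{iux} dx| ≤ e^y + 2/|u|` for each fixed `y`.
For `y ≥ 0` only the call part `x ≥ 0` contributes, and it is at most `∫_0^∞ e^{y-x} dx = e^y`.
For `y < 0` only the put part contributes, on an interval `[b, 0]` where `1 - e^{y-x}` is
nonnegative, increasing and at most `1`; integrating by parts against `e^{iux}` bounds it by
`2/|u|`. Finally `2/|u| ≤ (1 + 2|u|)/u²`.
-/

open MeasureTheory Filter Topology
open Set Complex

theorem norm_cexp_I_mul_ofReal_mul_ofReal (u x : ℝ) : ‖cexp (I * u * x)‖ = 1 := by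
  rw [norm_exp]; simp

theorem norm_intervalIntegral_mul_cexp_le {φ φ' : ℝ → ℝ} {a b u : ℝ} (hab : a ≤ b) (hu : u ≠ 0)
    (hφ : ∀ x ∈ Icc a b, HasDerivAt φ (φ' x) x) (hφ'_nonneg : ∀ x ∈ Icc a b, 0 ≤ φ' x)
    (hφ' : IntervalIntegrable φ' volume a b) (ha : 0 ≤ φ a) :
    ‖∫ x in a..b, (φ x : ℂ) * cexp (I * u * x)‖ ≤ 2 * φ b / |u| := by
  have hIu : I * u ≠ 0 := mul_ne_zero I_ne_zero (ofReal_ne_zero.mpr hu)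
  set v : ℝ → ℂ := fun x => cexp (I * u * x) / (I * u)
  have hv : ∀ x : ℝ, HasDerivAt v (cexp (I * u * x)) x := fun x => by
    have := (((hasDerivAt_id x).ofReal_comp).const_mul (I * u)).cexp.div_const (I * u)
    simpa [hIu] using this
  have hv_norm : ∀ x, ‖v x‖ = 1 / |u| := fun x => by
    simp [v, norm_cexp_I_mul_ofReal_mul_ofReal]
  have hIcc : uIcc a b = Icc a b := uIcc_of_le hab
  have hφ_incr : φ b - φ a = ∫ x in a..b, φ' x :=
    (intervalIntegral.integral_eq_sub_of_hasDerivAt (hIcc ▸ hφ) hφ').symm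
  have hφ_mono : φ a ≤ φ b := by
    have : 0 ≤ ∫ x in a..b, φ' x := intervalIntegral.integral_nonneg hab hφ'_nonneg
    linarith
  have hparts := intervalIntegral.integral_mul_deriv_eq_deriv_mul
    (fun x hx => (hφ x (hIcc ▸ hx)).ofReal_comp) (fun x _ => hv x)
    ⟨hφ'.1.ofReal, hφ'.2.ofReal⟩
    ((by fun_prop : Continuous fun x : ℝ => cexp (I * u * x)).intervalIntegrable a b)
  have hrest : ‖∫ x in a..b, (φ' x : ℂ) * v x‖ ≤ (φ b - φ a) / |u| := by
    calc ‖∫ x in a..b, (φ' x : ℂ) * v x‖ ≤ ∫ x in a..b, φ' x / |u| := by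
          refine intervalIntegral.norm_integral_le_of_norm_le hab
            (Eventually.of_forall fun x hx => ?_) (hφ'.div_const _)
          rw [norm_mul, hv_norm, norm_real, mul_one_div,
            Real.norm_of_nonneg (hφ'_nonneg x (Ioc_subset_Icc_self hx))]
      _ = (φ b - φ a) / |u| := by rw [intervalIntegral.integral_div, hφ_incr]
  rw [hparts]
  calc ‖(φ b : ℂ) * v b - φ a * v a - ∫ x in a..b, (φ' x : ℂ) * v x‖
      ≤ ‖(φ b : ℂ) * v b‖ + ‖(φ a : ℂ) * v a‖ + ‖∫ x in a..b, (φ' x : ℂ) * v x‖ :=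
        norm_sub_le_of_le (norm_sub_le _ _) le_rfl
    _ = φ b / |u| + φ a / |u| + ‖∫ x in a..b, (φ' x : ℂ) * v x‖ := by
        rw [norm_mul, norm_mul, hv_norm, hv_norm, norm_real, norm_real, mul_one_div, mul_one_div,
          Real.norm_of_nonneg ha, Real.norm_of_nonneg (ha.trans hφ_mono)]
    _ ≤ φ b / |u| + φ a / |u| + (φ b - φ a) / |u| := by gcongr
    _ = 2 * φ b / |u| := by ring

noncomputable def otmPayoff (y x : ℝ) : ℝ :=
  if 0 ≤ x then max (Real.exp (y - x) - 1) 0 else max (1 - Real.exp (y - x)) 0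

namespace otmPayoff

variable {y x : ℝ}

theorem measurable_uncurry : Measurable (Function.uncurry otmPayoff) := by
  unfold otmPayoff Function.uncurry
  exact Measurable.ite (measurableSet_le measurable_const measurable_snd)
    (by fun_prop) (by fun_prop)

theorem nonneg : 0 ≤ otmPayoff y x := by
  unfold otmPayoff; split_ifs <;> exact le_max_right _ _

theorem le_exp_mul_exp_neg (hx : 0 ≤ x) : otmPayoff y x ≤ Real.exp y * Real.exp (-x) := by
  rw [otmPayoff, if_pos hx, ← Real.exp_add, ← sub_eq_add_neg]
  exact max_le (by linarith) (Real.exp_pos _).le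

theorem le_exp_neg_mul : otmPayoff y x ≤ Real.exp (-x) * (1 + Real.exp y) := by
  rcases le_or_gt 0 x with hx | hx
  · calc otmPayoff y x ≤ Real.exp y * Real.exp (-x) := le_exp_mul_exp_neg hx
      _ ≤ Real.exp (-x) * (1 + Real.exp y) := by nlinarith [Real.exp_pos (-x)]
  · have h1 : 1 ≤ Real.exp (-x) := Real.one_le_exp (by linarith)
    rw [otmPayoff, if_neg hx.not_ge]
    refine max_le ?_ (by positivity)
    nlinarith [Real.exp_pos (y - x), Real.exp_pos y]

theorem eq_zero_of_nonneg_of_le (hx : 0 ≤ x) (hyx : y ≤ x) : otmPayoff y x = 0 := by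
  rw [otmPayoff, if_pos hx, max_eq_right]
  linarith [Real.exp_le_one_iff.mpr (sub_nonpos.mpr hyx)]

theorem eq_zero_of_neg_of_le (hx : x < 0) (hxy : x ≤ y) : otmPayoff y x = 0 := by
  rw [otmPayoff, if_neg hx.not_ge, max_eq_right]
  linarith [Real.one_le_exp (sub_nonneg.mpr hxy)]

theorem eq_one_sub_exp_of_lt_of_neg (hyx : y < x) (hx : x < 0) :
    otmPayoff y x = 1 - Real.exp (y - x) := by
  rw [otmPayoff, if_neg hx.not_ge, max_eq_left]
  linarith [Real.exp_le_one_iff.mpr (sub_nonpos.mpr hyx.le)]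

end otmPayoff

section PerSample

variable {u y : ℝ}

theorem integrableOn_otmPayoff_mul_cexp (a : ℝ) :
    IntegrableOn (fun x => (otmPayoff y x : ℂ) * cexp (I * u * x)) (Ioi a) := by
  refine ((integrableOn_exp_neg_Ioi a).mul_const (1 + Real.exp y)).mono' ?_ ?_
  · exact ((measurable_ofReal.comp (otmPayoff.measurable_uncurry.comp
      (measurable_const.prodMk measurable_id))).mul (by fun_prop)).aestronglyMeasurable
  · refine Eventually.of_forall fun x => ?_
    rw [norm_mul, norm_cexp_I_mul_ofReal_mul_ofReal, mul_one, norm_real,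
      Real.norm_of_nonneg otmPayoff.nonneg]
    exact otmPayoff.le_exp_neg_mul

theorem norm_setIntegral_Ioi_zero_otmPayoff_mul_cexp_le :
    ‖∫ x in Ioi 0, (otmPayoff y x : ℂ) * cexp (I * u * x)‖ ≤ Real.exp y := by
  calc ‖∫ x in Ioi 0, (otmPayoff y x : ℂ) * cexp (I * u * x)‖
      ≤ ∫ x in Ioi 0, Real.exp y * Real.exp (-x) := by
        refine norm_integral_le_of_norm_le ((integrableOn_exp_neg_Ioi 0).const_mul _) ?_
        refine (ae_restrict_iff' measurableSet_Ioi).mpr (Eventually.of_forall fun x hx => ?_)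
        rw [norm_mul, norm_cexp_I_mul_ofReal_mul_ofReal, mul_one, norm_real,
          Real.norm_of_nonneg otmPayoff.nonneg]
        exact otmPayoff.le_exp_mul_exp_neg (le_of_lt hx)
    _ = Real.exp y := by rw [integral_const_mul, integral_exp_neg_Ioi_zero, mul_one]

theorem setIntegral_Ioi_zero_otmPayoff_mul_cexp_of_neg (hy : y < 0) :
    ∫ x in Ioi 0, (otmPayoff y x : ℂ) * cexp (I * u * x) = 0 := by
  refine setIntegral_eq_zero_of_forall_eq_zero fun x hx => ?_
  rw [otmPayoff.eq_zero_of_nonneg_of_le (le_of_lt hx) (hy.trans hx).le, ofReal_zero, zero_mul]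

theorem setIntegral_Ioc_otmPayoff_mul_cexp_of_nonneg (hy : 0 ≤ y) (a : ℝ) :
    ∫ x in Ioc a 0, (otmPayoff y x : ℂ) * cexp (I * u * x) = 0 := by
  rw [integral_Ioc_eq_integral_Ioo]
  refine setIntegral_eq_zero_of_forall_eq_zero fun x hx => ?_
  rw [otmPayoff.eq_zero_of_neg_of_le hx.2 (hx.2.le.trans hy), ofReal_zero, zero_mul]

theorem norm_setIntegral_Ioc_otmPayoff_mul_cexp_le (hu : u ≠ 0) (hy : y < 0) {a : ℝ}
    (ha : a ≤ 0) :
    ‖∫ x in Ioc a 0, (otmPayoff y x : ℂ) * cexp (I * u * x)‖ ≤ 2 / |u| := by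
  set b := max a y
  have hb : b ≤ 0 := max_le ha hy.le
  have hput : ∫ x in Ioc a 0, (otmPayoff y x : ℂ) * cexp (I * u * x)
      = ∫ x in b..0, ((1 - Real.exp (y - x) : ℝ) : ℂ) * cexp (I * u * x) := by
    rw [integral_Ioc_eq_integral_Ioo, intervalIntegral.integral_of_le hb,
      integral_Ioc_eq_integral_Ioo, ← Ioo_inter_Ioi, ← setIntegral_indicator measurableSet_Ioi]
    refine setIntegral_congr_fun measurableSet_Ioo fun x hx => ?_
    by_cases hyx : x ∈ Ioi y
    · rw [indicator_of_mem hyx, otmPayoff.eq_one_sub_exp_of_lt_of_neg hyx hx.2]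
    · rw [indicator_of_notMem hyx, otmPayoff.eq_zero_of_neg_of_le hx.2 (not_lt.mp hyx),
        ofReal_zero, zero_mul]
  have hderiv : ∀ x, HasDerivAt (fun x => 1 - Real.exp (y - x)) (Real.exp (y - x)) x := fun x => by
    simpa using (((hasDerivAt_id x).const_sub y).exp).const_sub 1
  calc ‖∫ x in Ioc a 0, (otmPayoff y x : ℂ) * cexp (I * u * x)‖
      ≤ 2 * (1 - Real.exp (y - 0)) / |u| := by
        rw [hput]
        refine norm_intervalIntegral_mul_cexp_le hb hu (fun x _ => hderiv x)
          (fun x _ => (Real.exp_pos _).le)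
          ((by fun_prop : Continuous fun x => Real.exp (y - x)).intervalIntegrable _ _) ?_
        linarith [Real.exp_le_one_iff.mpr (sub_nonpos.mpr (le_max_right a y))]
    _ ≤ 2 / |u| := by gcongr; linarith [Real.exp_pos (y - 0)]

theorem norm_setIntegral_Ioi_otmPayoff_mul_cexp_le (hu : u ≠ 0) (y : ℝ) {a : ℝ} (ha : a ≤ 0) :
    ‖∫ x in Ioi a, (otmPayoff y x : ℂ) * cexp (I * u * x)‖ ≤ Real.exp y + 2 / |u| := by
  rw [← Ioc_union_Ioi_eq_Ioi ha, setIntegral_union Ioc_disjoint_Ioi_same measurableSet_Ioi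
    ((integrableOn_otmPayoff_mul_cexp a).mono_set Ioc_subset_Ioi_self)
    (integrableOn_otmPayoff_mul_cexp 0)]
  rcases lt_or_ge y 0 with hy | hy
  · rw [setIntegral_Ioi_zero_otmPayoff_mul_cexp_of_neg hy, add_zero]
    linarith [norm_setIntegral_Ioc_otmPayoff_mul_cexp_le hu hy ha, Real.exp_pos y]
  · rw [setIntegral_Ioc_otmPayoff_mul_cexp_of_nonneg hy, zero_add]
    linarith [norm_setIntegral_Ioi_zero_otmPayoff_mul_cexp_le (u := u) (y := y),
      (by positivity : 0 ≤ 2 / |u|)]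

end PerSample

theorem integrable_otmPayoff_mul_cexp_prod {Ω : Type*} [MeasurableSpace Ω] {μ : Measure Ω}
    [IsFiniteMeasure μ] {Y : Ω → ℝ} (hY : AEMeasurable Y μ)
    (hint : Integrable (fun ω => Real.exp (Y ω)) μ) (u a : ℝ) :
    Integrable (fun p : ℝ × Ω => (otmPayoff (Y p.2) p.1 : ℂ) * cexp (I * u * p.1))
      ((volume.restrict (Ioi a)).prod μ) := by
  have hF : Measurable fun q : ℝ × ℝ => (otmPayoff q.2 q.1 : ℂ) * cexp (I * u * q.1) :=
    (measurable_ofReal.comp (otmPayoff.measurable_uncurry.comp measurable_swap)).mul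
      (by fun_prop)
  refine ((integrableOn_exp_neg_Ioi a).mul_prod ((integrable_const 1).add hint)).mono'
    (hF.comp_aemeasurable (measurable_fst.aemeasurable.prodMk hY.comp_snd)).aestronglyMeasurable
    (Eventually.of_forall fun p => ?_)
  rw [norm_mul, norm_cexp_I_mul_ofReal_mul_ofReal, mul_one, norm_real,
    Real.norm_of_nonneg otmPayoff.nonneg]
  exact otmPayoff.le_exp_neg_mul

theorem stmt6_general {Ω : Type*} [MeasurableSpace Ω] (μ : Measure Ω) [IsProbabilityMeasure μ]
    (Y : Ω → ℝ)
    (hint : Integrable (fun ω => Real.exp (Y ω)) μ) :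
    ∀ C : ℝ, 0 ≤ C → ∀ u : ℝ, u ≠ 0 →
      ‖∫ x in Set.Ioi (-C),
          (((if 0 ≤ x then ∫ ω, max (Real.exp (Y ω - x) - 1) 0 ∂μ
              else ∫ ω, max (1 - Real.exp (Y ω - x)) 0 ∂μ : ℝ)) : ℂ) *
            Complex.exp (Complex.I * (u : ℂ) * (x : ℂ))‖
        ≤ (∫ ω, Real.exp (Y ω) ∂μ) + (1 + 2 * |u|) / u ^ 2 := by
  intro C hC u hu
  have hY : AEMeasurable Y μ := by
    simpa [Function.comp_def] using Real.measurable_log.comp_aemeasurable hint.aemeasurable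
  have hO : ∀ x : ℝ, (((if 0 ≤ x then ∫ ω, max (Real.exp (Y ω - x) - 1) 0 ∂μ
        else ∫ ω, max (1 - Real.exp (Y ω - x)) 0 ∂μ : ℝ)) : ℂ) * cexp (I * u * x)
      = ∫ ω, (otmPayoff (Y ω) x : ℂ) * cexp (I * u * x) ∂μ := fun x => by
    rw [integral_mul_const, integral_complex_ofReal]
    unfold otmPayoff
    split_ifs <;> rfl
  simp_rw [hO]
  rw [integral_integral_swap (integrable_otmPayoff_mul_cexp_prod hY hint u (-C))]
  calc ‖∫ ω, (∫ x in Ioi (-C), (otmPayoff (Y ω) x : ℂ) * cexp (I * u * x)) ∂μ‖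
      ≤ ∫ ω, (Real.exp (Y ω) + 2 / |u|) ∂μ :=
        norm_integral_le_of_norm_le (hint.add (integrable_const _)) (Eventually.of_forall
          fun ω => norm_setIntegral_Ioi_otmPayoff_mul_cexp_le hu (Y ω) (neg_nonpos.mpr hC))
    _ = (∫ ω, Real.exp (Y ω) ∂μ) + 2 / |u| := by
        rw [integral_add hint (integrable_const _), integral_const, probReal_univ, one_smul]
    _ ≤ (∫ ω, Real.exp (Y ω) ∂μ) + (1 + 2 * |u|) / u ^ 2 := by
        have : (1 + 2 * |u|) / u ^ 2 = 1 / u ^ 2 + 2 / |u| := by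
          rw [← sq_abs]; field_simp
        linarith [(by positivity : 0 ≤ 1 / u ^ 2)]

/-- Let `Y` be a random variable with `E(e^Y) < ∞` and
`O(x) = E((e^{Y−x}−1)⁺)` for `x ≥ 0`, `O(x) = E((1−e^{Y−x})⁺)` for `x < 0`. Then
for any `C ≥ 0` and `u ≠ 0`,
`|∫_{−C}^∞ O(x) e^{iux} dx| ≤ E(e^Y) + (1 + 2|u|)/u²`. -/
theorem stmt6 {Ω : Type*} [MeasurableSpace Ω] (μ : Measure Ω) [IsProbabilityMeasure μ]
    (Y : Ω → ℝ) (hY : Measurable Y)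
    (hint : Integrable (fun ω => Real.exp (Y ω)) μ) :
    ∀ C : ℝ, 0 ≤ C → ∀ u : ℝ, u ≠ 0 →
      ‖∫ x in Set.Ioi (-C),
          (((if 0 ≤ x then ∫ ω, max (Real.exp (Y ω - x) - 1) 0 ∂μ
              else ∫ ω, max (1 - Real.exp (Y ω - x)) 0 ∂μ : ℝ)) : ℂ) *
            Complex.exp (Complex.I * (u : ℂ) * (x : ℂ))‖
        ≤ (∫ ω, Real.exp (Y ω) ∂μ) + (1 + 2 * |u|) / u ^ 2 :=
  stmt6_general μ Y hint
end

section
/- Let (X,Y) be an ℝ^{m+n}-valued semimartingale with local characteristics (b, c, K), and let (b^X, c^X, K^X) and (b^Y, c^Y, K^Y) denote local characteristics of X and Y. Then the local exponent identity ψ^{(X,Y)}_t(u,v) = ψ^X_t(u) + ψ^Y_t(v) for all (u,v) ∈ ℝ^{m+n} (outside a dP⊗dt-null set) holds if and only if the joint diffusion matrix c is block-diagonal with blocks c^X, c^Y, and the joint Lévy kernel satisfies K(A) = K^X({x : (x,0) ∈ A}) + K^Y({y : (0,y) ∈ A}) for all Borel sets A (outside a dP⊗dt-null set). -/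
open MeasureTheory Filter Topology

/-- Componentwise truncation function `h(r) = r·1_{|r|≤1}`. -/
noncomputable def truncR (r : ℝ) : ℝ := if |r| ≤ 1 then r else 0

/-- The Lévy exponent associated with a Lévy–Khintchine triplet `(b, c, K)` on
`ℝ^ι`, relative to the componentwise truncation function. -/
noncomputable def levyExp {ι : Type*} [Fintype ι] (b : ι → ℝ) (c : Matrix ι ι ℝ)
    (K : Measure (ι → ℝ)) (u : ι → ℝ) : ℂ :=
  Complex.I * ((∑ i, u i * b i : ℝ) : ℂ)
    - (1 / 2 : ℂ) * ((∑ i, ∑ j, u i * c i j * u j : ℝ) : ℂ)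
    + ∫ x, (Complex.exp (Complex.I * ((∑ i, u i * x i : ℝ) : ℂ)) - 1
        - Complex.I * ((∑ i, u i * truncR (x i) : ℝ) : ℂ)) ∂K

/-!
Write `e(θ) = exp(iθ) - 1`. Because the truncation acts coordinatewise, the compensator terms
split exactly, and with `c` symmetric
`ψ(u,v) = ψ^X(u) + ψ^Y(v) + ∫ e(u·x) e(v·y) K(d(x,y)) - u·c^{XY}v`,
so the exponent identity says that the cross integral equals the bilinear form `u·c^{XY}v`.
Summing over the four sign choices `(±u, ±v)` removes the bilinear form and leaves
`∫ |e(u·x)|² |e(v·y)|² dK = 0`. So for each `(u,v)`, `K`-a.e. one of the two factors vanishes.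
Taking `u`, `v` to be `1` or `√2` times coordinate vectors, the irrationality of `√2` then shows
that `K` is carried by `ℝ^m × {0} ∪ {0} × ℝ^n`. The cross integral therefore vanishes, which
forces `c^{XY} = 0`, and a measure carried by these two subspaces that does not charge the
origin is the sum of its two marginals pushed back onto them. Conversely, the two conditions
make both the cross integral and the bilinear form vanish.
-/

open Complex Matrix

namespace LevyExponent

lemma norm_exp_I_mul_sub_one_le_two (θ : ℝ) : ‖exp (I * θ) - 1‖ ≤ 2 :=
  (norm_sub_le _ _).trans (by simp [norm_exp_I_mul_ofReal]; norm_num)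

lemma norm_exp_I_mul_sub_one_sub_le (θ : ℝ) :
    ‖exp (I * θ) - 1 - I * θ‖ ≤ 2 * θ ^ 2 := by
  have hIθ : ‖I * (θ : ℂ)‖ = |θ| := by simp
  rcases le_or_gt |θ| 1 with hθ | hθ
  · have := norm_exp_sub_one_sub_id_le (x := I * θ) (hIθ ▸ hθ)
    rw [hIθ, sq_abs] at this
    nlinarith [sq_nonneg θ]
  · calc ‖exp (I * θ) - 1 - I * θ‖ ≤ ‖exp (I * θ) - 1‖ + ‖I * (θ : ℂ)‖ := norm_sub_le _ _
      _ ≤ |θ| + |θ| := by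
          rw [hIθ]; gcongr; simpa using Real.norm_exp_I_mul_ofReal_sub_one_le (x := θ)
      _ ≤ 2 * θ ^ 2 := by nlinarith [sq_abs θ]

lemma exp_I_mul_sub_one_add_exp_I_mul_neg_sub_one (θ : ℝ) :
    (exp (I * θ) - 1) + (exp (I * ((-θ : ℝ) : ℂ)) - 1) = -((‖exp (I * θ) - 1‖ ^ 2 : ℝ) : ℂ) := by
  rw [mul_comm, mul_comm I, exp_mul_I, exp_mul_I, Complex.sq_norm, Complex.normSq_apply]
  apply Complex.ext <;> simp [← ofReal_cos, ← ofReal_sin]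
  nlinarith [Real.sin_sq_add_cos_sq θ]

lemma eq_zero_of_exp_I_mul_eq_one {x : ℝ} (h : exp (I * x) = 1)
    (h' : exp (I * ((√2 * x : ℝ) : ℂ)) = 1) : x = 0 := by
  have period : ∀ {y : ℝ}, exp (I * y) = 1 → ∃ k : ℤ, y = k * (2 * Real.pi) := fun hy => by
    obtain ⟨k, hk⟩ := Complex.exp_eq_one_iff.1 hy
    exact ⟨k, by simpa using congrArg im hk⟩
  obtain ⟨k, hk⟩ := period h
  obtain ⟨l, hl⟩ := period h'
  rcases eq_or_ne k 0 with rfl | hk0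
  · simpa using hk
  · refine absurd ?_ ((irrational_sqrt_two.mul_intCast hk0).ne_int l)
    rw [hk] at hl
    have := Real.pi_pos
    nlinarith

lemma eq_zero_or_eq_zero_of_exp_I_mul {x y : ℝ}
    (h : ∀ s ∈ ({1, √2} : Set ℝ), ∀ t ∈ ({1, √2} : Set ℝ),
      (exp (I * ((s * x : ℝ) : ℂ)) - 1) * (exp (I * ((t * y : ℝ) : ℂ)) - 1) = 0) :
    x = 0 ∨ y = 0 := by
  have nontrivial : ∀ {w : ℝ}, w ≠ 0 →
      ∃ s ∈ ({1, √2} : Set ℝ), exp (I * ((s * w : ℝ) : ℂ)) - 1 ≠ 0 := fun hw => by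
    by_contra! hall
    exact hw <| eq_zero_of_exp_I_mul_eq_one
      (by simpa [sub_eq_zero] using hall 1 (by simp)) (sub_eq_zero.1 (hall √2 (by simp)))
  by_contra! hxy
  obtain ⟨s, hs, hsx⟩ := nontrivial hxy.1
  obtain ⟨t, ht, hty⟩ := nontrivial hxy.2
  exact mul_ne_zero hsx hty (h s hs t ht)

lemma le_mul_min_one {t s A B : ℝ} (hs : 0 ≤ s) (hA : 0 ≤ A) (hB : 0 ≤ B)
    (hsmall : s ≤ 1 → t ≤ A * s) (hlarge : 1 < s → t ≤ B) : t ≤ (A + B) * min s 1 := by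
  rcases le_or_gt s 1 with h | h
  · rw [min_eq_left h]; nlinarith [hsmall h]
  · rw [min_eq_right h.le]; linarith [hlarge h]

lemma integral_map_restrict_compl_singleton {α β E : Type*} [MeasurableSpace α]
    [MeasurableSpace β] [NormedAddCommGroup E] [NormedSpace ℝ E] {μ : Measure α} {p : α → β}
    (hp : Measurable p) {f : β → E} (hf : AEStronglyMeasurable f (μ.map p)) {b : β}
    (hfb : f b = 0) :
    ∫ y, f y ∂((μ.map p).restrict {b}ᶜ) = ∫ x, f (p x) ∂μ := by
  rw [setIntegral_eq_integral_of_forall_compl_eq_zero fun y hy => by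
    rw [Set.notMem_compl_iff.1 hy, hfb], integral_map hp.aemeasurable hf]

lemma map_restrict_map_eq_restrict {α β : Type*} [MeasurableSpace α] [MeasurableSpace β]
    {μ : Measure α} {p : α → β} {e : β → α} (hp : Measurable p) (he : Measurable e)
    {s : Set β} (hs : MeasurableSet s) (h : ∀ᵐ x ∂μ.restrict (p ⁻¹' s), e (p x) = x) :
    ((μ.map p).restrict s).map e = μ.restrict (p ⁻¹' s) := by
  rw [Measure.restrict_map hp hs, Measure.map_map he hp]
  exact (Measure.map_congr h).trans Measure.map_id'

variable {ι κ : Type*}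

section Integrand

variable [Fintype ι]

noncomputable def integrand (u x : ι → ℝ) : ℂ :=
  exp (I * ((u ⬝ᵥ x : ℝ) : ℂ)) - 1 - I * ((∑ i, u i * truncR (x i) : ℝ) : ℂ)

lemma levyExp_eq (b : ι → ℝ) (c : Matrix ι ι ℝ) (K : Measure (ι → ℝ)) (u : ι → ℝ) :
    levyExp b c K u = I * ((u ⬝ᵥ b : ℝ) : ℂ) - 1 / 2 * ((u ⬝ᵥ c *ᵥ u : ℝ) : ℂ)
      + ∫ x, integrand u x ∂K := by
  simp only [levyExp, integrand, dotProduct, mulVec, Finset.mul_sum, mul_assoc]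

lemma sq_dotProduct_le (u x : ι → ℝ) : (u ⬝ᵥ x) ^ 2 ≤ (∑ i, u i ^ 2) * ∑ i, x i ^ 2 :=
  Finset.sum_mul_sq_le_sq_mul_sq _ _ _

lemma norm_integrand_le (u x : ι → ℝ) :
    ‖integrand u x‖ ≤ (2 * ∑ i, u i ^ 2 + (2 + ∑ i, |u i|)) * min (∑ i, x i ^ 2) 1 := by
  refine le_mul_min_one (by positivity) (by positivity) (by positivity) (fun hx => ?_) fun _ => ?_
  · have htrunc : ∀ i, truncR (x i) = x i := fun i => if_pos <| by
      rw [← sq_le_one_iff_abs_le_one]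
      exact (Finset.single_le_sum (fun j _ => sq_nonneg (x j)) (Finset.mem_univ i)).trans hx
    simp only [integrand, htrunc]
    calc _ ≤ 2 * (u ⬝ᵥ x) ^ 2 := norm_exp_I_mul_sub_one_sub_le _
      _ ≤ _ := by nlinarith [sq_dotProduct_le u x]
  · have htrunc : |∑ i, u i * truncR (x i)| ≤ ∑ i, |u i| := by
      refine (Finset.abs_sum_le_sum_abs _ _).trans (Finset.sum_le_sum fun i _ => ?_)
      rw [abs_mul]
      refine mul_le_of_le_one_right (abs_nonneg _) ?_
      unfold truncR; split_ifs with h <;> simp [h]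
    calc ‖integrand u x‖ ≤ ‖exp (I * ((u ⬝ᵥ x : ℝ) : ℂ)) - 1‖
          + ‖I * ((∑ i, u i * truncR (x i) : ℝ) : ℂ)‖ := norm_sub_le _ _
      _ ≤ 2 + ∑ i, |u i| := by
          gcongr
          · exact norm_exp_I_mul_sub_one_le_two _
          · rwa [norm_mul, norm_I, one_mul, norm_real, Real.norm_eq_abs]

lemma measurable_integrand (u : ι → ℝ) : Measurable (integrand u) := by
  have : Measurable truncR :=
    Measurable.ite (measurableSet_le measurable_norm measurable_const) measurable_id
      measurable_const
  unfold integrand dotProduct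
  fun_prop

lemma integrable_of_norm_le_mul_min_sum_sq_one {K : Measure (ι → ℝ)}
    (hK : ∫⁻ z, ENNReal.ofReal (min (∑ i, z i ^ 2) 1) ∂K < ⊤) {E : Type*}
    [NormedAddCommGroup E] {f : (ι → ℝ) → E} (hf : AEStronglyMeasurable f K) (C : ℝ)
    (hC : ∀ z, ‖f z‖ ≤ C * min (∑ i, z i ^ 2) 1) : Integrable f K := by
  have hmin : Integrable (fun z => min (∑ i, z i ^ 2) 1) K :=
    ⟨(by fun_prop : Measurable fun z : ι → ℝ => min (∑ i, z i ^ 2) 1).aestronglyMeasurable,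
      (hasFiniteIntegral_iff_ofReal (ae_of_all _ fun z => by positivity)).2 hK⟩
  exact (hmin.const_mul C).mono' hf (ae_of_all _ hC)

lemma integrable_integrand_comp [Fintype κ] {K : Measure (κ → ℝ)}
    (hK : ∫⁻ z, ENNReal.ofReal (min (∑ i, z i ^ 2) 1) ∂K < ⊤)
    {p : (κ → ℝ) → ι → ℝ} (hp : Measurable p) (hp_le : ∀ z, ∑ i, p z i ^ 2 ≤ ∑ i, z i ^ 2)
    (u : ι → ℝ) : Integrable (fun z => integrand u (p z)) K :=
  integrable_of_norm_le_mul_min_sum_sq_one hK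
    ((measurable_integrand u).comp hp).aestronglyMeasurable _
    fun z => (norm_integrand_le u (p z)).trans <| by gcongr; exact hp_le z

end Integrand

section LevyMeasures

/-- `ℝ^ι × {0} ∪ {0} × ℝ^κ` -/
def coordinateAxes : Set (ι ⊕ κ → ℝ) := {z | z ∘ Sum.inl = 0 ∨ z ∘ Sum.inr = 0}

/-- Jumps of the other component alone project to the origin, which a Lévy measure
does not charge. -/
noncomputable def levyMeasureFst (K : Measure (ι ⊕ κ → ℝ)) : Measure (ι → ℝ) :=
  (K.map (· ∘ Sum.inl)).restrict {0}ᶜ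

noncomputable def levyMeasureSnd (K : Measure (ι ⊕ κ → ℝ)) : Measure (κ → ℝ) :=
  (K.map (· ∘ Sum.inr)).restrict {0}ᶜ

lemma measurable_sumElim_zero_right : Measurable fun x : ι → ℝ => Sum.elim x (0 : κ → ℝ) :=
  measurable_pi_lambda _ fun i => by
    cases i <;> dsimp only [Sum.elim_inl, Sum.elim_inr] <;> fun_prop

lemma measurable_sumElim_zero_left : Measurable fun y : κ → ℝ => Sum.elim (0 : ι → ℝ) y :=
  measurable_pi_lambda _ fun i => by
    cases i <;> dsimp only [Sum.elim_inl, Sum.elim_inr] <;> fun_prop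

lemma measurableSet_coordinateAxes [Countable ι] [Countable κ] :
    MeasurableSet (coordinateAxes (ι := ι) (κ := κ)) :=
  ((measurableSet_singleton 0).preimage (by fun_prop)).union
    ((measurableSet_singleton 0).preimage (by fun_prop))

variable {K : Measure (ι ⊕ κ → ℝ)}

lemma map_levyMeasureFst [Countable ι] (h : ∀ᵐ z ∂K, z ∈ coordinateAxes) :
    (levyMeasureFst K).map (fun x => Sum.elim x (0 : κ → ℝ))
      = K.restrict ((· ∘ Sum.inl) ⁻¹' {0}ᶜ) := by
  refine map_restrict_map_eq_restrict (by fun_prop) measurable_sumElim_zero_right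
    (measurableSet_singleton 0).compl ?_
  filter_upwards [ae_restrict_mem ((measurableSet_singleton 0).compl.preimage (by fun_prop)),
    ae_restrict_of_ae h] with z hzx hz
  rw [← hz.resolve_left hzx, Sum.elim_comp_inl_inr]

lemma map_levyMeasureSnd [Countable κ] (h : ∀ᵐ z ∂K, z ∈ coordinateAxes) :
    (levyMeasureSnd K).map (fun y => Sum.elim (0 : ι → ℝ) y)
      = K.restrict ((· ∘ Sum.inr) ⁻¹' {0}ᶜ) := by
  refine map_restrict_map_eq_restrict (by fun_prop) measurable_sumElim_zero_left
    (measurableSet_singleton 0).compl ?_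
  filter_upwards [ae_restrict_mem ((measurableSet_singleton 0).compl.preimage (by fun_prop)),
    ae_restrict_of_ae h] with z hzy hz
  rw [← hz.resolve_right hzy, Sum.elim_comp_inl_inr]

lemma map_add_map_eq_self_iff [Countable ι] [Countable κ] (hK0 : K {0} = 0) :
    (levyMeasureFst K).map (fun x => Sum.elim x (0 : κ → ℝ))
        + (levyMeasureSnd K).map (fun y => Sum.elim (0 : ι → ℝ) y) = K
      ↔ ∀ᵐ z ∂K, z ∈ coordinateAxes := by
  constructor
  · intro hK
    rw [← hK, ae_add_measure_iff]
    exact ⟨(ae_map_iff measurable_sumElim_zero_right.aemeasurable measurableSet_coordinateAxes).2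
        (ae_of_all _ fun x => Or.inr (Sum.elim_comp_inr _ _)),
      (ae_map_iff measurable_sumElim_zero_left.aemeasurable measurableSet_coordinateAxes).2
        (ae_of_all _ fun y => Or.inl (Sum.elim_comp_inl _ _))⟩
  · intro h
    have hnull : K ((· ∘ Sum.inl) ⁻¹' {0}ᶜ ∩ (· ∘ Sum.inr) ⁻¹' {0}ᶜ) = 0 :=
      measure_mono_null (fun z hz (hmem : z ∈ coordinateAxes) => hmem.elim hz.1 hz.2)
        (ae_iff.1 h)
    have hunion : (· ∘ Sum.inl) ⁻¹' {0}ᶜ ∪ (· ∘ Sum.inr) ⁻¹' {0}ᶜ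
        = ({0}ᶜ : Set (ι ⊕ κ → ℝ)) := by
      ext z
      simp only [Set.mem_union, Set.mem_preimage, Set.mem_compl_singleton_iff, ne_eq,
        ← not_and_or]
      rw [not_iff_not]
      exact ⟨fun h0 => by rw [← Sum.elim_comp_inl_inr z, h0.1, h0.2, Sum.elim_zero_zero],
        fun h0 => by simp [h0]⟩
    rw [map_levyMeasureFst h, map_levyMeasureSnd h, ← Measure.restrict_union_add_inter _
      ((measurableSet_singleton 0).compl.preimage (by fun_prop)),
      Measure.restrict_eq_zero.2 hnull, add_zero, hunion,
      Measure.restrict_eq_self_of_ae_mem (s := {0}ᶜ) (compl_mem_ae_iff.2 hK0)]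

end LevyMeasures

section CrossTerm

variable [Fintype ι] [Fintype κ]

lemma sum_sq_comp_inl_le (z : ι ⊕ κ → ℝ) : ∑ i, (z ∘ Sum.inl) i ^ 2 ≤ ∑ i, z i ^ 2 := by
  rw [Fintype.sum_sum_type]
  exact le_add_of_nonneg_right (by positivity)

lemma sum_sq_comp_inr_le (z : ι ⊕ κ → ℝ) : ∑ i, (z ∘ Sum.inr) i ^ 2 ≤ ∑ i, z i ^ 2 := by
  rw [Fintype.sum_sum_type]
  exact le_add_of_nonneg_left (by positivity)

noncomputable def crossTerm (u : ι → ℝ) (v : κ → ℝ) (z : ι ⊕ κ → ℝ) : ℂ :=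
  (exp (I * ((u ⬝ᵥ (z ∘ Sum.inl) : ℝ) : ℂ)) - 1) * (exp (I * ((v ⬝ᵥ (z ∘ Sum.inr) : ℝ) : ℂ)) - 1)

lemma measurable_crossTerm (u : ι → ℝ) (v : κ → ℝ) : Measurable (crossTerm u v) := by
  unfold crossTerm dotProduct
  fun_prop

lemma norm_crossTerm_le (u : ι → ℝ) (v : κ → ℝ) (z : ι ⊕ κ → ℝ) :
    ‖crossTerm u v z‖ ≤ ((∑ i, u i ^ 2 + ∑ j, v j ^ 2) + 4) * min (∑ i, z i ^ 2) 1 := by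
  rw [crossTerm, norm_mul]
  set a := u ⬝ᵥ (z ∘ Sum.inl)
  set b := v ⬝ᵥ (z ∘ Sum.inr)
  have ha : ‖exp (I * (a : ℂ)) - 1‖ ≤ |a| := Real.norm_exp_I_mul_ofReal_sub_one_le
  have hb : ‖exp (I * (b : ℂ)) - 1‖ ≤ |b| := Real.norm_exp_I_mul_ofReal_sub_one_le
  refine le_mul_min_one (by positivity) (by positivity) (by norm_num) (fun _ => ?_) fun _ => ?_
  · have hab : |a| * |b| ≤ a ^ 2 + b ^ 2 := by
      nlinarith [sq_abs a, sq_abs b, sq_nonneg (|a| - |b|)]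
    have hua := (sq_dotProduct_le u (z ∘ Sum.inl)).trans
      (mul_le_mul_of_nonneg_left (sum_sq_comp_inl_le z) (by positivity))
    have hvb := (sq_dotProduct_le v (z ∘ Sum.inr)).trans
      (mul_le_mul_of_nonneg_left (sum_sq_comp_inr_le z) (by positivity))
    calc _ ≤ |a| * |b| := mul_le_mul ha hb (norm_nonneg _) (abs_nonneg _)
      _ ≤ _ := by linarith
  · calc _ ≤ (2 : ℝ) * 2 :=
          mul_le_mul (norm_exp_I_mul_sub_one_le_two a) (norm_exp_I_mul_sub_one_le_two b)
            (norm_nonneg _) (by norm_num)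
      _ = 4 := by norm_num

lemma crossTerm_eq_zero_of_mem_coordinateAxes {z : ι ⊕ κ → ℝ} (hz : z ∈ coordinateAxes)
    (u : ι → ℝ) (v : κ → ℝ) : crossTerm u v z = 0 := by
  rcases hz with hz | hz <;> simp [crossTerm, hz]

lemma crossTerm_single [DecidableEq ι] [DecidableEq κ] (i : ι) (j : κ) (s t : ℝ)
    (z : ι ⊕ κ → ℝ) :
    crossTerm (Pi.single i s) (Pi.single j t) z
      = (exp (I * ((s * z (Sum.inl i) : ℝ) : ℂ)) - 1)
        * (exp (I * ((t * z (Sum.inr j) : ℝ) : ℂ)) - 1) := by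
  simp only [crossTerm, single_dotProduct, Function.comp_apply]

lemma crossTerm_add_crossTerm_neg (u : ι → ℝ) (v : κ → ℝ) (z : ι ⊕ κ → ℝ) :
    crossTerm u v z + crossTerm (-u) v z + crossTerm u (-v) z + crossTerm (-u) (-v) z
      = ((‖crossTerm u v z‖ ^ 2 : ℝ) : ℂ) := by
  simp only [crossTerm, neg_dotProduct, norm_mul, mul_pow, ofReal_mul]
  have ha := exp_I_mul_sub_one_add_exp_I_mul_neg_sub_one (u ⬝ᵥ (z ∘ Sum.inl))
  have hb := exp_I_mul_sub_one_add_exp_I_mul_neg_sub_one (v ⬝ᵥ (z ∘ Sum.inr))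
  linear_combination (exp (I * ((v ⬝ᵥ (z ∘ Sum.inr) : ℝ) : ℂ)) - 1
    + (exp (I * ((-(v ⬝ᵥ (z ∘ Sum.inr)) : ℝ) : ℂ)) - 1)) * ha
    - ((‖exp (I * ((u ⬝ᵥ (z ∘ Sum.inl) : ℝ) : ℂ)) - 1‖ ^ 2 : ℝ) : ℂ) * hb

lemma integrand_sum_elim (u : ι → ℝ) (v : κ → ℝ) (z : ι ⊕ κ → ℝ) :
    integrand (Sum.elim u v) z
      = integrand u (z ∘ Sum.inl) + integrand v (z ∘ Sum.inr) + crossTerm u v z := by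
  simp only [integrand, crossTerm, dotProduct, Fintype.sum_sum_type, Sum.elim_inl,
    Sum.elim_inr, Function.comp_apply]
  push_cast
  rw [mul_add, exp_add]
  ring

lemma sum_elim_dotProduct_mulVec_sum_elim {c : Matrix (ι ⊕ κ) (ι ⊕ κ) ℝ} (hc : c.IsSymm)
    (u : ι → ℝ) (v : κ → ℝ) :
    Sum.elim u v ⬝ᵥ c *ᵥ Sum.elim u v
      = u ⬝ᵥ c.submatrix Sum.inl Sum.inl *ᵥ u + v ⬝ᵥ c.submatrix Sum.inr Sum.inr *ᵥ v
        + 2 * (u ⬝ᵥ c.submatrix Sum.inl Sum.inr *ᵥ v) := by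
  have hcross : v ⬝ᵥ c.submatrix Sum.inr Sum.inl *ᵥ u
      = u ⬝ᵥ c.submatrix Sum.inl Sum.inr *ᵥ v := by
    rw [← hc.eq, ← transpose_submatrix, mulVec_transpose, dotProduct_comm,
      ← dotProduct_mulVec, hc.eq]
  conv_lhs => rw [← fromBlocks_toBlocks c]
  rw [fromBlocks_mulVec, Sum.elim_comp_inl, Sum.elim_comp_inr, sumElim_dotProduct_sumElim]
  change u ⬝ᵥ (c.submatrix Sum.inl Sum.inl *ᵥ u + c.submatrix Sum.inl Sum.inr *ᵥ v)
    + v ⬝ᵥ (c.submatrix Sum.inr Sum.inl *ᵥ u + c.submatrix Sum.inr Sum.inr *ᵥ v) = _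
  rw [dotProduct_add, dotProduct_add, hcross]
  ring

variable {K : Measure (ι ⊕ κ → ℝ)}

lemma integral_integrand_sum_elim
    (hK : ∫⁻ z, ENNReal.ofReal (min (∑ i, z i ^ 2) 1) ∂K < ⊤) (u : ι → ℝ) (v : κ → ℝ) :
    ∫ z, integrand (Sum.elim u v) z ∂K
      = ∫ x, integrand u x ∂(levyMeasureFst K) + ∫ y, integrand v y ∂(levyMeasureSnd K)
        + ∫ z, crossTerm u v z ∂K := by
  have hfst := integrable_integrand_comp hK (by fun_prop) sum_sq_comp_inl_le u
  have hsnd := integrable_integrand_comp hK (by fun_prop) sum_sq_comp_inr_le v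
  have hcross := integrable_of_norm_le_mul_min_sum_sq_one hK
    (measurable_crossTerm u v).aestronglyMeasurable _ (norm_crossTerm_le u v)
  simp only [integrand_sum_elim]
  rw [integral_add (f := fun z => integrand u (z ∘ Sum.inl) + integrand v (z ∘ Sum.inr))
      (hfst.add hsnd) hcross, integral_add hfst hsnd, levyMeasureFst, levyMeasureSnd,
    integral_map_restrict_compl_singleton (by fun_prop)
      (measurable_integrand u).aestronglyMeasurable (by simp [integrand, truncR]),
    integral_map_restrict_compl_singleton (by fun_prop)
      (measurable_integrand v).aestronglyMeasurable (by simp [integrand, truncR])]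

lemma levyExp_sum_elim (hK : ∫⁻ z, ENNReal.ofReal (min (∑ i, z i ^ 2) 1) ∂K < ⊤)
    {c : Matrix (ι ⊕ κ) (ι ⊕ κ) ℝ} (hc : c.IsSymm) (b : ι ⊕ κ → ℝ) (u : ι → ℝ) (v : κ → ℝ) :
    levyExp b c K (Sum.elim u v)
      = levyExp (b ∘ Sum.inl) (c.submatrix Sum.inl Sum.inl) (levyMeasureFst K) u
        + levyExp (b ∘ Sum.inr) (c.submatrix Sum.inr Sum.inr) (levyMeasureSnd K) v
        + (∫ z, crossTerm u v z ∂K - ((u ⬝ᵥ c.submatrix Sum.inl Sum.inr *ᵥ v : ℝ) : ℂ)) := by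
  have hb : Sum.elim u v ⬝ᵥ b = u ⬝ᵥ (b ∘ Sum.inl) + v ⬝ᵥ (b ∘ Sum.inr) := by
    rw [← sumElim_dotProduct_sumElim, Sum.elim_comp_inl_inr]
  rw [levyExp_eq, levyExp_eq, levyExp_eq, integral_integrand_sum_elim hK,
    sum_elim_dotProduct_mulVec_sum_elim hc, hb]
  push_cast
  ring

lemma ae_crossTerm_eq_zero (hK : ∫⁻ z, ENNReal.ofReal (min (∑ i, z i ^ 2) 1) ∂K < ⊤)
    {B : Matrix ι κ ℝ} (h : ∀ u v, ∫ z, crossTerm u v z ∂K = ((u ⬝ᵥ B *ᵥ v : ℝ) : ℂ))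
    (u : ι → ℝ) (v : κ → ℝ) : ∀ᵐ z ∂K, crossTerm u v z = 0 := by
  have hint : ∀ u v, Integrable (crossTerm u v) K := fun u v =>
    integrable_of_norm_le_mul_min_sum_sq_one hK
      (measurable_crossTerm u v).aestronglyMeasurable _ (norm_crossTerm_le u v)
  have hsum : ∫ z, ((‖crossTerm u v z‖ ^ 2 : ℝ) : ℂ) ∂K = 0 := by
    simp only [← crossTerm_add_crossTerm_neg]
    rw [integral_add (by fun_prop) (hint _ _), integral_add (by fun_prop) (hint _ _),
      integral_add (hint _ _) (hint _ _), h, h, h, h]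
    simp only [neg_dotProduct, mulVec_neg, dotProduct_neg]
    push_cast
    ring
  have hsq : Integrable (fun z => ‖crossTerm u v z‖ ^ 2) K := by
    have : Integrable (fun z => ((‖crossTerm u v z‖ ^ 2 : ℝ) : ℂ)) K := by
      simp only [← crossTerm_add_crossTerm_neg]
      fun_prop
    simpa only [RCLike.re_to_complex, ofReal_re] using this.re
  rw [integral_complex_ofReal, ofReal_eq_zero] at hsum
  filter_upwards [(integral_eq_zero_iff_of_nonneg (fun z => by positivity) hsq).1 hsum] with z hz
  simpa using hz

lemma ae_mem_coordinateAxes (h : ∀ u v, ∀ᵐ z ∂K, crossTerm u v z = 0) :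
    ∀ᵐ z ∂K, z ∈ coordinateAxes := by
  classical
  have hcoord : ∀ i j, ∀ᵐ z ∂K, z (Sum.inl i) = 0 ∨ z (Sum.inr j) = 0 := fun i j => by
    filter_upwards [h (Pi.single i 1) (Pi.single j 1), h (Pi.single i √2) (Pi.single j 1),
      h (Pi.single i 1) (Pi.single j √2), h (Pi.single i √2) (Pi.single j √2)]
      with z h₁₁ h₂₁ h₁₂ h₂₂
    refine eq_zero_or_eq_zero_of_exp_I_mul ?_
    rintro s (rfl | rfl) t (rfl | rfl) <;> rwa [← crossTerm_single]
  filter_upwards [ae_all_iff.2 fun i => ae_all_iff.2 (hcoord i)] with z hz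
  refine or_iff_not_imp_left.2 fun hx => ?_
  obtain ⟨i, hi⟩ := Function.ne_iff.1 hx
  exact funext fun j => (hz i j).resolve_left hi

lemma integral_crossTerm_eq_zero (h : ∀ᵐ z ∂K, z ∈ coordinateAxes) (u : ι → ℝ) (v : κ → ℝ) :
    ∫ z, crossTerm u v z ∂K = 0 :=
  integral_eq_zero_of_ae <| h.mono fun _ hz => crossTerm_eq_zero_of_mem_coordinateAxes hz u v

theorem levyExp_sum_elim_eq_add_iff (hK0 : K {0} = 0)
    (hK : ∫⁻ z, ENNReal.ofReal (min (∑ i, z i ^ 2) 1) ∂K < ⊤)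
    {c : Matrix (ι ⊕ κ) (ι ⊕ κ) ℝ} (hc : c.IsSymm) (b : ι ⊕ κ → ℝ) :
    (∀ u v, levyExp b c K (Sum.elim u v)
        = levyExp (b ∘ Sum.inl) (c.submatrix Sum.inl Sum.inl) (levyMeasureFst K) u
          + levyExp (b ∘ Sum.inr) (c.submatrix Sum.inr Sum.inr) (levyMeasureSnd K) v)
      ↔ (∀ i j, c (Sum.inl i) (Sum.inr j) = 0)
        ∧ ∀ A, MeasurableSet A → K A = levyMeasureFst K {x | Sum.elim x (0 : κ → ℝ) ∈ A}
          + levyMeasureSnd K {y | Sum.elim (0 : ι → ℝ) y ∈ A} := by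
  have hmeasure : (∀ A, MeasurableSet A → K A
        = levyMeasureFst K {x | Sum.elim x (0 : κ → ℝ) ∈ A}
          + levyMeasureSnd K {y | Sum.elim (0 : ι → ℝ) y ∈ A})
      ↔ ∀ᵐ z ∂K, z ∈ coordinateAxes := by
    rw [← map_add_map_eq_self_iff hK0, eq_comm, Measure.ext_iff]
    refine forall₂_congr fun A hA => ?_
    rw [Measure.add_apply, Measure.map_apply measurable_sumElim_zero_right hA,
      Measure.map_apply measurable_sumElim_zero_left hA]
    rfl
  have hblock : (∀ i j, c (Sum.inl i) (Sum.inr j) = 0) ↔ c.submatrix Sum.inl Sum.inr = 0 :=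
    Matrix.ext_iff
  simp only [levyExp_sum_elim hK hc, add_eq_left, sub_eq_zero, hmeasure, hblock]
  constructor
  · intro h
    have hax := ae_mem_coordinateAxes (ae_crossTerm_eq_zero hK h)
    refine ⟨Matrix.ext fun i j => ?_, hax⟩
    classical
    have hij := h (Pi.single i 1) (Pi.single j 1)
    rw [integral_crossTerm_eq_zero hax, eq_comm] at hij
    simpa using hij
  · rintro ⟨hc0, hax⟩ u v
    rw [integral_crossTerm_eq_zero hax, hc0]
    simp

end CrossTerm

end LevyExponent

theorem stmt8_general {Ω : Type*} [MeasurableSpace Ω] (μ : Measure Ω)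
    {m n : ℕ}
    (b : ℝ → Ω → (Fin m ⊕ Fin n) → ℝ)
    (c : ℝ → Ω → Matrix (Fin m ⊕ Fin n) (Fin m ⊕ Fin n) ℝ)
    (K : ℝ → Ω → Measure ((Fin m ⊕ Fin n) → ℝ))
    (hK0 : ∀ t ω, K t ω {0} = 0)
    (hK2 : ∀ t ω,
      ∫⁻ x, ENNReal.ofReal (min (∑ i, (x i) ^ 2) 1) ∂(K t ω) < ⊤)
    (hcsymm : ∀ t ω i j, c t ω i j = c t ω j i) :
    (∀ᵐ p ∂(μ.prod (volume.restrict (Set.Ici (0 : ℝ)))),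
        ∀ (u : Fin m → ℝ) (v : Fin n → ℝ),
          levyExp (b p.2 p.1) (c p.2 p.1) (K p.2 p.1) (Sum.elim u v)
            = levyExp (fun i => b p.2 p.1 (Sum.inl i))
                ((c p.2 p.1).submatrix Sum.inl Sum.inl)
                (((K p.2 p.1).map (fun x i => x (Sum.inl i))).restrict
                  ({(0 : Fin m → ℝ)}ᶜ)) u
              + levyExp (fun j => b p.2 p.1 (Sum.inr j))
                  ((c p.2 p.1).submatrix Sum.inr Sum.inr)
                  (((K p.2 p.1).map (fun x j => x (Sum.inr j))).restrict
                    ({(0 : Fin n → ℝ)}ᶜ)) v)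
      ↔
    (∀ᵐ p ∂(μ.prod (volume.restrict (Set.Ici (0 : ℝ)))),
        (∀ i j, c p.2 p.1 (Sum.inl i) (Sum.inr j) = 0) ∧
          ∀ A : Set ((Fin m ⊕ Fin n) → ℝ), MeasurableSet A →
            K p.2 p.1 A
              = (((K p.2 p.1).map (fun x i => x (Sum.inl i))).restrict
                  ({(0 : Fin m → ℝ)}ᶜ)) {x | Sum.elim x (0 : Fin n → ℝ) ∈ A}
                + (((K p.2 p.1).map (fun x j => x (Sum.inr j))).restrict
                    ({(0 : Fin n → ℝ)}ᶜ)) {y | Sum.elim (0 : Fin m → ℝ) y ∈ A}) :=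
  eventually_congr <| .of_forall fun p =>
    LevyExponent.levyExp_sum_elim_eq_add_iff (hK0 p.2 p.1) (hK2 p.2 p.1)
      (IsSymm.ext fun i j => hcsymm p.2 p.1 j i) (b p.2 p.1)

/-- Let `(X,Y)` be an `ℝ^{m+n}`-valued semimartingale with local
characteristics `(b, c, K)`; the local characteristics of the components are the
corresponding projections `(b^X, c^X, K^X)` and `(b^Y, c^Y, K^Y)`. Then the local
exponent identity `ψ^{(X,Y)}(u,v) = ψ^X(u) + ψ^Y(v)` for all `(u,v)` holds outside a
`dP ⊗ dt`-null set iff, outside a `dP ⊗ dt`-null set, `c` is block diagonal with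
blocks `c^X, c^Y` and `K(A) = K^X{x : (x,0) ∈ A} + K^Y{y : (0,y) ∈ A}` for all
Borel `A`. -/
theorem stmt8 {Ω : Type*} [MeasurableSpace Ω] (μ : Measure Ω) [IsProbabilityMeasure μ]
    {m n : ℕ}
    (b : ℝ → Ω → (Fin m ⊕ Fin n) → ℝ)
    (c : ℝ → Ω → Matrix (Fin m ⊕ Fin n) (Fin m ⊕ Fin n) ℝ)
    (K : ℝ → Ω → Measure ((Fin m ⊕ Fin n) → ℝ))
    (hK0 : ∀ t ω, K t ω {0} = 0)
    (hK2 : ∀ t ω,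
      ∫⁻ x, ENNReal.ofReal (min (∑ i, (x i) ^ 2) 1) ∂(K t ω) < ⊤)
    (hcsymm : ∀ t ω i j, c t ω i j = c t ω j i)
    (hcpsd : ∀ t ω (u : (Fin m ⊕ Fin n) → ℝ), 0 ≤ ∑ i, ∑ j, u i * c t ω i j * u j) :
    (∀ᵐ p ∂(μ.prod (volume.restrict (Set.Ici (0 : ℝ)))),
        ∀ (u : Fin m → ℝ) (v : Fin n → ℝ),
          levyExp (b p.2 p.1) (c p.2 p.1) (K p.2 p.1) (Sum.elim u v)
            = levyExp (fun i => b p.2 p.1 (Sum.inl i))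
                ((c p.2 p.1).submatrix Sum.inl Sum.inl)
                (((K p.2 p.1).map (fun x i => x (Sum.inl i))).restrict
                  ({(0 : Fin m → ℝ)}ᶜ)) u
              + levyExp (fun j => b p.2 p.1 (Sum.inr j))
                  ((c p.2 p.1).submatrix Sum.inr Sum.inr)
                  (((K p.2 p.1).map (fun x j => x (Sum.inr j))).restrict
                    ({(0 : Fin n → ℝ)}ᶜ)) v)
      ↔
    (∀ᵐ p ∂(μ.prod (volume.restrict (Set.Ici (0 : ℝ)))),
        (∀ i j, c p.2 p.1 (Sum.inl i) (Sum.inr j) = 0) ∧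
          ∀ A : Set ((Fin m ⊕ Fin n) → ℝ), MeasurableSet A →
            K p.2 p.1 A
              = (((K p.2 p.1).map (fun x i => x (Sum.inl i))).restrict
                  ({(0 : Fin m → ℝ)}ᶜ)) {x | Sum.elim x (0 : Fin n → ℝ) ∈ A}
                + (((K p.2 p.1).map (fun x j => x (Sum.inr j))).restrict
                    ({(0 : Fin n → ℝ)}ᶜ)) {y | Sum.elim (0 : Fin m → ℝ) y ∈ A}) :=
  stmt8_general μ b c K hK0 hK2 hcsymm
end

section
/- Let (N(x))_{x∈ℝ} be a family of nonnegative local martingales with a common localising sequence (τ_n), such that (ω,x) ↦ N_t(x)(ω) is jointly measurable, x ↦ N_t(x)(ω) is right-continuous with ∫_{−C}^∞ N_t(x)(ω)dx < ∞ for all C, the improper limits lim_{C→∞} ∫_{−C}^∞ e^{iux} N_t(x) dx exist for u ≠ 0, and for each n, t, u ≠ 0 the partial integrals ∫_{−C}^∞ e^{iux}N^{τ_n}_t(x)dx are dominated uniformly in C by an integrable random variable. Then, for every u ∈ ℝ\{0}, the process X_t(u) := ℱ{x ↦ N_t(x)}(u), provided it has càdlàg paths, is a local martingale with localising sequence (τ_n).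 -/
/-!
Truncate the Fourier integral to `x > -C`. For each fixed `C`, Fubini and the martingale property
of every `N(x)^{τ_n}` show that `ω ↦ ∫_{-C}^∞ e^{iux} N^{τ_n}_t(x)(ω) dx` is a martingale; Fubini is
justified on the events where the total mass `∫_{-C}^∞ N^{τ_n}_s(x) dx` at the earlier time is at
most `k`, which exhaust the probability space. The stopped transform is the pointwise limit of
these martingales as `C → ∞`, dominated uniformly in `C`, and dominated convergence passes the
martingale property to the limit.
-/

open MeasureTheory Filter Topology Set

theorem tendsto_ceil_mul_two_pow_div_two_pow (x : ℝ) :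
    Tendsto (fun k : ℕ => (⌈x * 2 ^ k⌉ : ℝ) / 2 ^ k) atTop (𝓝[≥] x) := by
  have hge : ∀ k : ℕ, x ≤ (⌈x * 2 ^ k⌉ : ℝ) / 2 ^ k := fun k => by
    rw [le_div_iff₀ (by positivity)]
    exact Int.le_ceil _
  have hle : ∀ k : ℕ, (⌈x * 2 ^ k⌉ : ℝ) / 2 ^ k ≤ x + (2 ^ k)⁻¹ := fun k => by
    rw [div_le_iff₀ (by positivity), add_mul, inv_mul_cancel₀ (by positivity)]
    exact (Int.ceil_lt_add_one _).le
  have hupper : Tendsto (fun k : ℕ => x + ((2 : ℝ) ^ k)⁻¹) atTop (𝓝 x) := by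
    simpa using (tendsto_const_nhds (x := x)).add
      (tendsto_inv_atTop_zero.comp (tendsto_pow_atTop_atTop_of_one_lt (one_lt_two (α := ℝ))))
  exact tendsto_nhdsWithin_iff.2
    ⟨tendsto_of_tendsto_of_tendsto_of_le_of_le tendsto_const_nhds hupper hge hle,
      Eventually.of_forall hge⟩

section RightContinuous

variable {Ω E : Type*} {m : MeasurableSpace Ω} [TopologicalSpace E]
  [TopologicalSpace.PseudoMetrizableSpace E] [MeasurableSpace E] [BorelSpace E]

/-- Right-continuity in `x` makes the dyadic approximations `x ↦ f (⌈2ᵏ x⌉ / 2ᵏ)`, which are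
countably valued in `x`, converge. -/
theorem measurable_uncurry_of_continuousWithinAt_Ici {f : ℝ → Ω → E}
    (hf : ∀ x, Measurable (f x)) (hrc : ∀ ω x, ContinuousWithinAt (fun y => f y ω) (Ici x) x) :
    Measurable fun p : Ω × ℝ => f p.2 p.1 := by
  have happrox : ∀ k : ℕ, Measurable fun p : Ω × ℝ => f ((⌈p.2 * 2 ^ k⌉ : ℝ) / 2 ^ k) p.1 :=
    fun k => (measurable_from_prod_countable_left (f := fun q : Ω × ℤ => f ((q.2 : ℝ) / 2 ^ k) q.1)
      fun z => hf ((z : ℝ) / 2 ^ k)).comp (measurable_fst.prodMk (measurable_snd.mul_const _).ceil)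
  exact measurable_of_tendsto_metrizable' atTop happrox <| tendsto_pi_nhds.2 fun p =>
    (hrc p.1 p.2).tendsto.comp (tendsto_ceil_mul_two_pow_div_two_pow p.2)

end RightContinuous

theorem MeasurableSpace.prod_mono_left {α β : Type*} {m₁ m₂ : MeasurableSpace α}
    (h : m₁ ≤ m₂) (mβ : MeasurableSpace β) : m₁.prod mβ ≤ m₂.prod mβ :=
  sup_le_sup (comap_mono h) le_rfl

theorem integrable_prod_restrict_inter_integral_le {Ω α : Type*} [MeasurableSpace Ω]
    [MeasurableSpace α] {μ : Measure Ω} [IsFiniteMeasure μ] {ν : Measure α} [SFinite ν]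
    {f : Ω × α → ℝ} (hf : Measurable f) (hf0 : 0 ≤ f)
    (hfν : ∀ ω, Integrable (fun x => f (ω, x)) ν) {A : Set Ω} (hA : MeasurableSet A) (k : ℝ) :
    Integrable f ((μ.restrict (A ∩ {ω | ∫ x, f (ω, x) ∂ν ≤ k})).prod ν) := by
  have hT : Measurable fun ω => ∫ x, f (ω, x) ∂ν :=
    hf.stronglyMeasurable.integral_prod_right'.measurable
  rw [integrable_prod_iff hf.aestronglyMeasurable]
  refine ⟨ae_of_all _ hfν, ?_⟩
  simp only [Real.norm_of_nonneg (hf0 _)]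
  refine Integrable.of_bound hT.aestronglyMeasurable k
    (ae_restrict_of_forall_mem (hA.inter (hT measurableSet_Iic)) fun ω hω => ?_)
  rw [Real.norm_of_nonneg (integral_nonneg fun x => hf0 (ω, x))]
  exact hω.2

section MartingaleLimit

variable {Ω ι E : Type*} {m0 : MeasurableSpace Ω} {μ : Measure Ω} [IsFiniteMeasure μ]
  [Preorder ι] {F : Filtration ι m0} [NormedAddCommGroup E] [NormedSpace ℝ E] [CompleteSpace E]

theorem martingale_of_setIntegral_eq {f : ι → Ω → E} (hadp : StronglyAdapted F f)
    (hint : ∀ i, Integrable (f i) μ)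
    (hf : ∀ i j, i ≤ j → ∀ s, MeasurableSet[F i] s → ∫ ω in s, f i ω ∂μ = ∫ ω in s, f j ω ∂μ) :
    Martingale f F μ :=
  ⟨hadp, fun i j hij => (ae_eq_condExp_of_forall_setIntegral_eq (F.le i) (hint j)
    (fun _ _ _ => (hint i).integrableOn) (fun s hs _ => hf i j hij s hs)
    (hadp i).aestronglyMeasurable).symm⟩

theorem martingale_of_tendsto_of_norm_le {κ : Type*} {l : Filter κ} [l.IsCountablyGenerated]
    [l.NeBot] {G : κ → ι → Ω → E} {Y : ι → Ω → E} (hG : ∀ k, Martingale (G k) F μ)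
    (hbound : ∀ i, ∃ Z : Ω → ℝ, Integrable Z μ ∧ ∀ k ω, ‖G k i ω‖ ≤ Z ω)
    (hlim : ∀ i ω, Tendsto (fun k => G k i ω) l (𝓝 (Y i ω))) :
    Martingale Y F μ := by
  have hadp : StronglyAdapted F Y := fun i =>
    stronglyMeasurable_of_tendsto l (fun k => (hG k).stronglyAdapted i)
      (tendsto_pi_nhds.2 (hlim i))
  have hsetIntegral : ∀ i {s : Set Ω}, MeasurableSet s →
      Tendsto (fun k => ∫ ω in s, G k i ω ∂μ) l (𝓝 (∫ ω in s, Y i ω ∂μ)) := fun i s _ => by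
    obtain ⟨Z, hZ, hGZ⟩ := hbound i
    exact tendsto_integral_filter_of_dominated_convergence Z
      (Eventually.of_forall fun k => ((hG k).integrable i).aestronglyMeasurable.restrict)
      (Eventually.of_forall fun k => ae_of_all _ (hGZ k)) hZ.integrableOn
      (ae_of_all _ (hlim i))
  refine martingale_of_setIntegral_eq hadp (fun i => ?_) fun i j hij s hs => ?_
  · obtain ⟨Z, hZ, hGZ⟩ := hbound i
    exact hZ.mono' ((hadp i).mono (F.le i)).aestronglyMeasurable <| ae_of_all _ fun ω =>
      le_of_tendsto (hlim i ω).norm (Eventually.of_forall fun k => hGZ k ω)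
  · refine tendsto_nhds_unique (hsetIntegral i (F.le i s hs)) ?_
    simpa only [(hG _).setIntegral_eq hij hs] using hsetIntegral j (F.le i s hs)

end MartingaleLimit

section FamilyOfMartingales

variable {Ω ι α : Type*} {m0 : MeasurableSpace Ω} {μ : Measure Ω} [IsFiniteMeasure μ]
  [Preorder ι] {F : Filtration ι m0} [mα : MeasurableSpace α] {ν : Measure α} [SigmaFinite ν]
  {M : α → ι → Ω → ℝ} {e : α → ℂ}

theorem stronglyAdapted_integral_ofReal_mul
    (hM : ∀ i, Measurable[(F i).prod mα] fun p : Ω × α => M p.2 i p.1) (he : Measurable e) :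
    StronglyAdapted F fun i ω => ∫ x, (M x i ω : ℂ) * e x ∂ν := fun i => by
  let _ := F i
  exact ((Complex.measurable_ofReal.comp (hM i)).mul
    (he.comp measurable_snd)).stronglyMeasurable.integral_prod_right'

variable (hM : ∀ x, Martingale (M x) F μ) (hpos : ∀ x i ω, 0 ≤ M x i ω)
include hM hpos

theorem integrable_prod_of_martingale {i j : ι} (hij : i ≤ j) {s : Set Ω}
    (hs : MeasurableSet[F i] s) (hMj : Measurable fun p : Ω × α => M p.2 j p.1)
    (hMi : Integrable (fun p : Ω × α => M p.2 i p.1) ((μ.restrict s).prod ν)) :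
    Integrable (fun p : Ω × α => M p.2 j p.1) ((μ.restrict s).prod ν) := by
  rw [integrable_prod_iff' hMj.aestronglyMeasurable]
  refine ⟨ae_of_all _ fun x => ((hM x).integrable j).restrict, ?_⟩
  refine ((integrable_prod_iff' hMi.aestronglyMeasurable).1 hMi).2.congr (ae_of_all _ fun x => ?_)
  simp only [Real.norm_of_nonneg (hpos _ _ _)]
  exact (hM x).setIntegral_eq hij hs

theorem setIntegral_integral_ofReal_mul_eq (he : Measurable e) {c : ℝ} (hc : ∀ x, ‖e x‖ ≤ c)
    {i j : ι} (hij : i ≤ j) {s : Set Ω} (hs : MeasurableSet[F i] s)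
    (hMi : Integrable (fun p : Ω × α => M p.2 i p.1) ((μ.restrict s).prod ν))
    (hMj : Measurable fun p : Ω × α => M p.2 j p.1) :
    ∫ ω in s, ∫ x, (M x i ω : ℂ) * e x ∂ν ∂μ = ∫ ω in s, ∫ x, (M x j ω : ℂ) * e x ∂ν ∂μ := by
  have hswap : ∀ r, Integrable (fun p : Ω × α => M p.2 r p.1) ((μ.restrict s).prod ν) →
      ∫ ω in s, ∫ x, (M x r ω : ℂ) * e x ∂ν ∂μ = ∫ x, (∫ ω in s, M x r ω ∂μ : ℝ) * e x ∂ν := by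
    intro r hr
    rw [integral_integral_swap (hr.ofReal.mul_bdd (he.comp measurable_snd).aestronglyMeasurable
      (ae_of_all _ fun p => hc p.2))]
    simp only [integral_mul_const, integral_complex_ofReal]
  rw [hswap i hMi, hswap j (integrable_prod_of_martingale hM hpos hij hs hMj hMi)]
  simp only [(hM _).setIntegral_eq hij hs]

theorem martingale_integral_ofReal_mul
    (hMm : ∀ i, Measurable[(F i).prod mα] fun p : Ω × α => M p.2 i p.1)
    (hMν : ∀ i ω, Integrable (fun x => M x i ω) ν) (he : Measurable e) {c : ℝ}
    (hc : ∀ x, ‖e x‖ ≤ c) (hint : ∀ i, Integrable (fun ω => ∫ x, (M x i ω : ℂ) * e x ∂ν) μ) :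
    Martingale (fun i ω => ∫ x, (M x i ω : ℂ) * e x ∂ν) F μ := by
  refine martingale_of_setIntegral_eq (stronglyAdapted_integral_ofReal_mul hMm he) hint
    fun i j hij A hA => ?_
  have hMm₀ : ∀ r, Measurable fun p : Ω × α => M p.2 r p.1 := fun r =>
    (hMm r).mono (MeasurableSpace.prod_mono_left (F.le r) mα) le_rfl
  set T : Ω → ℝ := fun ω => ∫ x, M x i ω ∂ν
  have hT : Measurable[F i] T := by
    let _ := F i
    exact (hMm i).stronglyMeasurable.integral_prod_right'.measurable
  set s : ℕ → Set Ω := fun k => A ∩ {ω | T ω ≤ k}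
  have hs : ∀ k, MeasurableSet[F i] (s k) := fun k => hA.inter (hT measurableSet_Iic)
  have hs_mono : Monotone s := fun k l hkl =>
    inter_subset_inter_right _ fun ω (hω : T ω ≤ k) => hω.trans (Nat.cast_le.2 hkl)
  have hs_union : ⋃ k, s k = A := by
    rw [← inter_iUnion]
    exact inter_eq_left.2 fun ω _ => mem_iUnion.2 (exists_nat_ge (T ω))
  have hlim : ∀ r, Tendsto (fun k => ∫ ω in s k, ∫ x, (M x r ω : ℂ) * e x ∂ν ∂μ) atTop
      (𝓝 (∫ ω in A, ∫ x, (M x r ω : ℂ) * e x ∂ν ∂μ)) := fun r => by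
    simpa only [hs_union] using tendsto_setIntegral_of_monotone (fun k => F.le i _ (hs k))
      hs_mono (hs_union ▸ (hint r).integrableOn)
  have heq : ∀ k, ∫ ω in s k, ∫ x, (M x i ω : ℂ) * e x ∂ν ∂μ
      = ∫ ω in s k, ∫ x, (M x j ω : ℂ) * e x ∂ν ∂μ := fun k =>
    setIntegral_integral_ofReal_mul_eq hM hpos he hc hij (hs k)
      (integrable_prod_restrict_inter_integral_le (hMm₀ i) (fun _ => hpos _ _ _) (hMν i)
        (F.le i A hA) k) (hMm₀ j)
  exact tendsto_nhds_unique (hlim i) (by simpa only [heq] using hlim j)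

end FamilyOfMartingales

theorem stmt17_general {Ω : Type*} {m0 : MeasurableSpace Ω} (μ : Measure Ω)
    [IsProbabilityMeasure μ] (F : Filtration ℝ m0)
    (N : ℝ → ℝ → Ω → ℝ)
    (hNpos : ∀ x t ω, 0 ≤ N x t ω)
    (hNrc : ∀ t ω (x : ℝ), ContinuousWithinAt (fun y => N y t ω) (Set.Ici x) x)
    (hNint : ∀ t ω (C : ℝ), IntegrableOn (fun x => N x t ω) (Set.Ioi (-C)) volume)
    (τ : ℕ → Ω → ℝ)
    (hNloc : ∀ x n, Martingale (fun t ω => N x (min t (τ n ω)) ω) F μ)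
    (hdom : ∀ (n : ℕ) (t : ℝ) (u : ℝ), u ≠ 0 →
      ∃ Z : Ω → ℝ, Integrable Z μ ∧ ∀ (C : ℝ) (ω : Ω),
        ‖∫ x in Set.Ioi (-C), ((N x (min t (τ n ω)) ω : ℝ) : ℂ) *
            Complex.exp (Complex.I * (u : ℂ) * (x : ℂ))‖ ≤ Z ω)
    (X : ℝ → ℝ → Ω → ℂ)
    (hX : ∀ (u : ℝ), u ≠ 0 → ∀ t ω,
      Tendsto
        (fun C : ℝ => ∫ x in Set.Ioi (-C), ((N x t ω : ℝ) : ℂ) *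
          Complex.exp (Complex.I * (u : ℂ) * (x : ℂ)))
        atTop (𝓝 (X u t ω))) :
    ∀ (u : ℝ), u ≠ 0 →
      ∀ n, Martingale (fun t ω => X u (min t (τ n ω)) ω) F μ := by
  intro u hu n
  have he : Measurable fun x : ℝ => Complex.exp (Complex.I * u * x) := by fun_prop
  have he_norm : ∀ x : ℝ, ‖Complex.exp (Complex.I * u * x)‖ ≤ 1 := fun x => by
    simp [Complex.norm_exp]
  have hjm : ∀ t, Measurable[(F t).prod _] fun p : Ω × ℝ => N p.2 (min t (τ n p.1)) p.1 :=
    fun t => measurable_uncurry_of_continuousWithinAt_Ici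
      (fun x => ((hNloc x n).stronglyAdapted t).measurable) fun ω x => hNrc _ ω x
  refine martingale_of_tendsto_of_norm_le (fun C => ?_) (fun t => hdom n t u hu)
    fun t ω => hX u hu _ ω
  refine martingale_integral_ofReal_mul (hNloc · n) (fun _ _ _ => hNpos _ _ _) hjm
    (fun t ω => hNint _ ω C) he he_norm fun t => ?_
  obtain ⟨Z, hZ, hZbound⟩ := hdom n t u hu
  have hmeas := stronglyAdapted_integral_ofReal_mul (ν := volume.restrict (Ioi (-C)))
    (M := fun x t ω => N x (min t (τ n ω)) ω) hjm he t
  exact hZ.mono' (hmeas.mono (F.le t)).aestronglyMeasurable (ae_of_all _ (hZbound C))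

/-- Let `(N(x))_{x∈ℝ}` be a family of nonnegative local martingales
with a common localising sequence `(τ_n)`, jointly measurable, right-continuous and
integrable in `x` on half-lines, such that the improper Fourier limits exist and the
partial integrals of the stopped processes are dominated by integrable random
variables. Then for every `u ≠ 0` the improper Fourier transform
`X_t(u) = ℱ{x ↦ N_t(x)}(u)`, provided it has càdlàg paths, is a local martingale with
localising sequence `(τ_n)`. -/
theorem stmt17 {Ω : Type*} {m0 : MeasurableSpace Ω} (μ : Measure Ω)
    [IsProbabilityMeasure μ] (F : Filtration ℝ m0)
    (N : ℝ → ℝ → Ω → ℝ)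
    (hNpos : ∀ x t ω, 0 ≤ N x t ω)
    (hNjm : ∀ t : ℝ, Measurable (fun p : Ω × ℝ => N p.2 t p.1))
    (hNrc : ∀ t ω (x : ℝ), ContinuousWithinAt (fun y => N y t ω) (Set.Ici x) x)
    (hNint : ∀ t ω (C : ℝ), IntegrableOn (fun x => N x t ω) (Set.Ioi (-C)) volume)
    (τ : ℕ → Ω → ℝ)
    (hτ : ∀ n, IsStoppingTime F (fun ω => ((τ n ω : ℝ) : WithTop ℝ)))
    (hτtop : ∀ ω, Tendsto (fun n => τ n ω) atTop atTop)
    (hNloc : ∀ x n, Martingale (fun t ω => N x (min t (τ n ω)) ω) F μ)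
    (hdom : ∀ (n : ℕ) (t : ℝ) (u : ℝ), u ≠ 0 →
      ∃ Z : Ω → ℝ, Integrable Z μ ∧ ∀ (C : ℝ) (ω : Ω),
        ‖∫ x in Set.Ioi (-C), ((N x (min t (τ n ω)) ω : ℝ) : ℂ) *
            Complex.exp (Complex.I * (u : ℂ) * (x : ℂ))‖ ≤ Z ω)
    (X : ℝ → ℝ → Ω → ℂ)
    (hX : ∀ (u : ℝ), u ≠ 0 → ∀ t ω,
      Tendsto
        (fun C : ℝ => ∫ x in Set.Ioi (-C), ((N x t ω : ℝ) : ℂ) *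
          Complex.exp (Complex.I * (u : ℂ) * (x : ℂ)))
        atTop (𝓝 (X u t ω)))
    (hXcadlag : ∀ (u : ℝ), u ≠ 0 → ∀ ω t,
      ContinuousWithinAt (fun s => X u s ω) (Set.Ici t) t ∧
        ∃ l, Tendsto (fun s => X u s ω) (nhdsWithin t (Set.Iio t)) (𝓝 l)) :
    ∀ (u : ℝ), u ≠ 0 →
      ∀ n, Martingale (fun t ω => X u (min t (τ n ω)) ω) F μ :=
  stmt17_general μ F N hNpos hNrc hNint τ hNloc hdom X hX
end
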